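/- arXiv:2505.24811 — 5 statements merged into one kernel-verified Lean document; each statement's English description precedes it below -/
import Mathlib

section
/- Let n ≤ m be positive integers, let π be a uniformly random permutation of [n+m], and fix distinct l₁,…,l_n ∈ [m]. For i ∈ [n] define d_i = 1{π(i) ∈ [n] and π(n+l_i) ∈ [n+m]∖[n]} − 1{π(i) ∈ [n+m]∖[n] and π(n+l_i) ∈ [n]}. Then E[Σ_{i=1}^n d_i] = 0 and the sum is SG(2n); in particular E[exp(θ Σ_{i=1}^n d_i)] ≤ exp(nθ²) for all θ ∈ ℝ. -/
/-!
Right multiplication by the involution that swaps `i` and `n + lᵢ` for every `i` in a chosen set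
is a bijection of the permutations which flips the signs of exactly those `dᵢ`. Hence the law of
`(d₁, …, dₙ)` is invariant under all sign changes, so `Σᵢ dᵢ` has the law of the Rademacher sum
`Σᵢ εᵢ dᵢ` with independent signs `εᵢ`. Given `π`, that sum has moment generating function
`∏ᵢ cosh (θ dᵢ) ≤ exp (θ² Σᵢ dᵢ² / 2) ≤ exp (n θ² / 2)`, since `|dᵢ| ≤ 1`.
-/

noncomputable section

/-- The quantity `d_i` of the lemma: for a permutation `π` of `[n+m]` and `l_i ∈ [m]`,
`d_i = 1{π(i) ∈ [n], π(n+l_i) ∉ [n]} − 1{π(i) ∉ [n], π(n+l_i) ∈ [n]}`. -/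
def dTerm (n m : ℕ) (l : Fin n ↪ Fin m) (π : Equiv.Perm (Fin (n + m))) (i : Fin n) : ℝ :=
  (if ((π (Fin.castAdd m i) : ℕ) < n) ∧ ¬((π (Fin.natAdd n (l i)) : ℕ) < n) then (1 : ℝ) else 0)
    - (if ¬((π (Fin.castAdd m i) : ℕ) < n) ∧ ((π (Fin.natAdd n (l i)) : ℕ) < n) then (1 : ℝ) else 0)

open Finset

namespace RandomPermSignFlip

def boolSign (b : Bool) : ℝ := if b then -1 else 1

@[simp] lemma boolSign_true : boolSign true = -1 := rfl

@[simp] lemma boolSign_false : boolSign false = 1 := rfl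

section Rademacher

open Real

variable {ι : Type*} [Fintype ι] [DecidableEq ι]

lemma sum_exp_boolSign_mul (x : ι → ℝ) :
    ∑ ε : ι → Bool, exp (∑ i, boolSign (ε i) * x i) = ∏ i, 2 * cosh (x i) := by
  simp only [Real.exp_sum]
  rw [← Fintype.prod_sum (fun i b => exp (boolSign b * x i))]
  refine prod_congr rfl fun i _ => ?_
  simp only [Fintype.sum_bool, boolSign_true, boolSign_false, cosh_eq]
  ring_nf

lemma sum_exp_mul_sum_boolSign_mul_le (θ : ℝ) (x : ι → ℝ) :
    ∑ ε : ι → Bool, exp (θ * ∑ i, boolSign (ε i) * x i) ≤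
      2 ^ Fintype.card ι * exp (θ ^ 2 / 2 * ∑ i, x i ^ 2) := by
  have hcosh (i : ι) : 2 * cosh (θ * x i) ≤ 2 * exp (θ ^ 2 / 2 * x i ^ 2) := by
    have := cosh_le_exp_half_sq (θ * x i)
    rw [mul_pow, mul_div_right_comm] at this
    linarith
  calc ∑ ε : ι → Bool, exp (θ * ∑ i, boolSign (ε i) * x i)
      = ∑ ε : ι → Bool, exp (∑ i, boolSign (ε i) * (θ * x i)) := by
        simp only [mul_sum, mul_left_comm θ]
    _ = ∏ i, 2 * cosh (θ * x i) := sum_exp_boolSign_mul _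
    _ ≤ ∏ i, 2 * exp (θ ^ 2 / 2 * x i ^ 2) :=
        prod_le_prod (fun i _ => by positivity) fun i _ => hcosh i
    _ = 2 ^ Fintype.card ι * exp (θ ^ 2 / 2 * ∑ i, x i ^ 2) := by
        rw [prod_mul_distrib, prod_const, card_univ, mul_sum, Real.exp_sum]

end Rademacher

lemma sum_eq_inv_two_pow_mul_sum_sum_boolSign {G ι : Type*} [Group G] [Fintype G] [Fintype ι]
    [DecidableEq ι] (d : G → ι → ℝ) (g : (ι → Bool) → G)
    (hg : ∀ ε π i, d (π * g ε) i = boolSign (ε i) * d π i) (F : (ι → ℝ) → ℝ) :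
    ∑ π, F (d π) =
      (2 ^ Fintype.card ι : ℝ)⁻¹ * ∑ π, ∑ ε : ι → Bool, F (fun i => boolSign (ε i) * d π i) := by
  have hflip (ε : ι → Bool) : ∑ π, F (fun i => boolSign (ε i) * d π i) = ∑ π, F (d π) := by
    simp only [← hg]
    exact Equiv.sum_comp (Equiv.mulRight (g ε)) (fun π => F (d π))
  rw [sum_comm]
  simp only [hflip, sum_const, card_univ, Fintype.card_fun, Fintype.card_bool, nsmul_eq_mul]
  push_cast
  rw [inv_mul_cancel_left₀ (by positivity)]

section PairSwap

variable {α β : Type*}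

def pairSwapFun (l : α ↪ β) (ε : α → Bool) : α ⊕ β → α ⊕ β
  | .inl a => if ε a then .inr (l a) else .inl a
  | .inr b =>
    match Function.partialInv l b with
    | some a => if ε a then .inl a else .inr b
    | none => .inr b

lemma pairSwapFun_inl (l : α ↪ β) (ε : α → Bool) (a : α) :
    pairSwapFun l ε (.inl a) = if ε a then .inr (l a) else .inl a := rfl

lemma pairSwapFun_inr_apply (l : α ↪ β) (ε : α → Bool) (a : α) :
    pairSwapFun l ε (.inr (l a)) = if ε a then .inl a else .inr (l a) := by
  simp only [pairSwapFun, Function.partialInv_left l.injective]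

lemma pairSwapFun_involutive (l : α ↪ β) (ε : α → Bool) :
    Function.Involutive (pairSwapFun l ε) := by
  rintro (a | b)
  · by_cases h : ε a <;> simp [pairSwapFun_inl, pairSwapFun_inr_apply, h]
  · rcases hb : Function.partialInv l b with _ | a
    · simp [pairSwapFun, hb]
    · obtain rfl : l a = b := l.injective.isPartialInv a b |>.mp hb
      by_cases h : ε a <;> simp [pairSwapFun_inl, pairSwapFun_inr_apply, h]

end PairSwap

variable {n m : ℕ}

def flipPerm (l : Fin n ↪ Fin m) (ε : Fin n → Bool) : Equiv.Perm (Fin (n + m)) :=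
  finSumFinEquiv.permCongr (pairSwapFun_involutive l ε).toPerm

lemma flipPerm_castAdd (l : Fin n ↪ Fin m) (ε : Fin n → Bool) (i : Fin n) :
    flipPerm l ε (Fin.castAdd m i) = if ε i then Fin.natAdd n (l i) else Fin.castAdd m i := by
  simp only [flipPerm, Equiv.permCongr_apply, finSumFinEquiv_symm_apply_castAdd,
    Function.Involutive.coe_toPerm, pairSwapFun_inl]
  split_ifs <;> simp

lemma flipPerm_natAdd (l : Fin n ↪ Fin m) (ε : Fin n → Bool) (i : Fin n) :
    flipPerm l ε (Fin.natAdd n (l i)) = if ε i then Fin.castAdd m i else Fin.natAdd n (l i) := by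
  simp only [flipPerm, Equiv.permCongr_apply, finSumFinEquiv_symm_apply_natAdd,
    Function.Involutive.coe_toPerm, pairSwapFun_inr_apply]
  split_ifs <;> simp

lemma dTerm_mul_flipPerm (l : Fin n ↪ Fin m) (ε : Fin n → Bool) (π : Equiv.Perm (Fin (n + m)))
    (i : Fin n) : dTerm n m l (π * flipPerm l ε) i = boolSign (ε i) * dTerm n m l π i := by
  simp only [dTerm, Equiv.Perm.mul_apply, flipPerm_castAdd, flipPerm_natAdd]
  cases ε i <;> split_ifs <;> simp_all

lemma dTerm_sq_le_one (l : Fin n ↪ Fin m) (π : Equiv.Perm (Fin (n + m))) (i : Fin n) :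
    dTerm n m l π i ^ 2 ≤ 1 := by
  unfold dTerm
  split_ifs <;> simp_all

end RandomPermSignFlip

open RandomPermSignFlip in
theorem stmt_8_general (n m : ℕ) (l : Fin n ↪ Fin m) :
    ((Fintype.card (Equiv.Perm (Fin (n + m))) : ℝ))⁻¹ *
        (∑ π : Equiv.Perm (Fin (n + m)), ∑ i : Fin n, dTerm n m l π i) = 0 ∧
      ∀ θ : ℝ,
        ((Fintype.card (Equiv.Perm (Fin (n + m))) : ℝ))⁻¹ *
            ∑ π : Equiv.Perm (Fin (n + m)), Real.exp (θ * ∑ i : Fin n, dTerm n m l π i) ≤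
          Real.exp (n * θ ^ 2) := by
  set N := (Fintype.card (Equiv.Perm (Fin (n + m))) : ℝ) with hN
  have hN0 : N ≠ 0 := by positivity
  have hflip := dTerm_mul_flipPerm l
  have hsym := sum_eq_inv_two_pow_mul_sum_sum_boolSign (dTerm n m l) (flipPerm l) hflip
  refine ⟨?_, fun θ => ?_⟩
  · have hneg := Equiv.sum_comp (Equiv.mulRight (flipPerm l fun _ => true))
      fun π => ∑ i, dTerm n m l π i
    simp only [Equiv.coe_mulRight, hflip, boolSign_true, neg_one_mul, sum_neg_distrib] at hneg
    rw [neg_eq_self] at hneg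
    rw [hneg, mul_zero]
  have hsq (π : Equiv.Perm (Fin (n + m))) : ∑ i, dTerm n m l π i ^ 2 ≤ n := by
    simpa using sum_le_sum fun i (_ : i ∈ univ) => dTerm_sq_le_one l π i
  calc N⁻¹ * ∑ π, Real.exp (θ * ∑ i, dTerm n m l π i)
      = N⁻¹ * ((2 ^ n : ℝ)⁻¹ * ∑ π, ∑ ε : Fin n → Bool,
          Real.exp (θ * ∑ i, boolSign (ε i) * dTerm n m l π i)) := by
        rw [hsym fun d => Real.exp (θ * ∑ i, d i), Fintype.card_fin]
    _ ≤ N⁻¹ * ((2 ^ n : ℝ)⁻¹ * ∑ _π : Equiv.Perm (Fin (n + m)),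
          2 ^ n * Real.exp (θ ^ 2 / 2 * n)) := by
        gcongr with π
        refine (sum_exp_mul_sum_boolSign_mul_le θ _).trans ?_
        rw [Fintype.card_fin]
        gcongr
        exact hsq π
    _ = Real.exp (n * (θ ^ 2 / 2)) := by
        rw [sum_const, card_univ, nsmul_eq_mul, ← hN, mul_comm (θ ^ 2 / 2)]
        field_simp
    _ ≤ Real.exp (n * θ ^ 2) := by gcongr; linarith [sq_nonneg θ]

/-- for a uniformly random permutation `π` of `[n+m]` and fixed distinct
`l₁,…,l_n ∈ [m]`, the sum `Σᵢ dᵢ` has mean zero and is SG(2n):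
`E[exp(θ Σᵢ dᵢ)] ≤ exp(nθ²)` for all `θ`. -/
theorem stmt_8 (n m : ℕ) (hn : 0 < n) (hm : 0 < m) (hnm : n ≤ m) (l : Fin n ↪ Fin m) :
    ((Fintype.card (Equiv.Perm (Fin (n + m))) : ℝ))⁻¹ *
        (∑ π : Equiv.Perm (Fin (n + m)), ∑ i : Fin n, dTerm n m l π i) = 0 ∧
      ∀ θ : ℝ,
        ((Fintype.card (Equiv.Perm (Fin (n + m))) : ℝ))⁻¹ *
            ∑ π : Equiv.Perm (Fin (n + m)), Real.exp (θ * ∑ i : Fin n, dTerm n m l π i) ≤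
          Real.exp (n * θ ^ 2) :=
  stmt_8_general n m l
end
end

section
/- Let p_X be a probability vector on [d], let X be a random variable with P(X = j) = p_{X,j} for j ∈ [d], and let ε > 0. Then the unary-encoding privatization Z of X with parameter ε is a SG(17/4) random vector; in particular, for every unit vector u ∈ ℝ^d and every λ ∈ ℝ, E[exp(λ·uᵀ(Z − E[Z]))] ≤ exp(17λ²/8). -/
open MeasureTheory ProbabilityTheory

noncomputable section

/-- `X` is sub-Gaussian with variance proxy `σ²`, written SG(σ²). -/
def IsSubGaussian {Ω : Type*} [MeasurableSpace Ω] (P : Measure Ω) (X : Ω → ℝ) (σ2 : ℝ) : Prop :=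
  ∀ l : ℝ, ∫ ω, Real.exp (l * (X ω - ∫ ω', X ω' ∂P)) ∂P ≤ Real.exp (l ^ 2 * σ2 / 2)

/-- Euclidean inner product on `Fin d → ℝ`. -/
def dotp {d : ℕ} (x y : Fin d → ℝ) : ℝ := ∑ j, x j * y j

/-- A random vector `Z` is SG(σ²) if `vᵀZ` is SG(‖v‖₂²σ²) for every `v`. -/
def IsSubGaussianVec {Ω : Type*} [MeasurableSpace Ω] (P : Measure Ω) {d : ℕ}
    (Z : Ω → Fin d → ℝ) (σ2 : ℝ) : Prop :=
  ∀ v : Fin d → ℝ, IsSubGaussian P (fun ω => dotp v (Z ω)) ((∑ j, (v j) ^ 2) * σ2)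

/-- The unary-encoding randomization function: coordinate `j` of the privatized vector built
from datum `x` and uniform auxiliary randomness `u`, with privacy parameter `ε`:
`R_j(x,u) = 1{x=j}·1{u ≤ e^{ε/2}/(e^{ε/2}+1)} + 1{x≠j}·1{u > e^{ε/2}/(e^{ε/2}+1)}`. -/
def ueR {d : ℕ} (ε : ℝ) (x j : Fin d) (u : ℝ) : ℝ :=
  if u ≤ Real.exp (ε / 2) / (Real.exp (ε / 2) + 1) then (if x = j then 1 else 0)
  else (if x = j then 0 else 1)

/-- The datum together with the auxiliary uniform variables, as one family. -/
def ueFam {Ω : Type*} {d : ℕ} (X : Ω → Fin d) (V : Fin d → Ω → ℝ) :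
    (i : Sum Unit (Fin d)) → Ω → Sum.elim (fun _ => Fin d) (fun _ => ℝ) i
  | Sum.inl _ => X
  | Sum.inr j => V j

/-- Measurable space structures for `ueFam`. -/
def ueFamMS {d : ℕ} :
    (i : Sum Unit (Fin d)) → MeasurableSpace (Sum.elim (fun _ => Fin d) (fun _ => ℝ) i)
  | Sum.inl _ => (inferInstance : MeasurableSpace (Fin d))
  | Sum.inr _ => (inferInstance : MeasurableSpace ℝ)

/-!
Conditionally on `X = x`, the coordinates of `Z` are independent `{0, 1}`-valued variables, so by
Hoeffding's lemma `vᵀZ` is sub-Gaussian around its conditional mean `m x` with variance proxy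
`‖v‖² / 4`. That mean is `m x = C + v_x (2 a_x - 1)` with `C` independent of `x` and `a_x ∈ [0, 1]`,
so `m X` ranges over an interval of length `2 ‖v‖` and, by Hoeffding's lemma again, is sub-Gaussian
with proxy `‖v‖²`. Since `X` is independent of the auxiliary variables, the two bounds multiply:
`vᵀZ` is sub-Gaussian with proxy `5 ‖v‖² / 4 ≤ 17 ‖v‖² / 4`.
-/

section SubGaussian

variable {Ω : Type*} [MeasurableSpace Ω] {P : Measure Ω}

lemma IsSubGaussian.mono {X : Ω → ℝ} {σ2 τ2 : ℝ} (h : IsSubGaussian P X σ2) (hστ : σ2 ≤ τ2) :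
    IsSubGaussian P X τ2 := fun t =>
  (h t).trans (Real.exp_le_exp.2 (by gcongr))

lemma integral_comp_eq_sum_measureReal {α : Type*} [Fintype α] [MeasurableSpace α]
    [MeasurableSingletonClass α] [IsFiniteMeasure P] {X : Ω → α} (hX : Measurable X) (g : α → ℝ) :
    ∫ ω, g (X ω) ∂P = ∑ x, P.real (X ⁻¹' {x}) * g x := by
  rw [← integral_map hX.aemeasurable (measurable_of_finite g).aestronglyMeasurable,
    integral_fintype .of_finite]
  simp [map_measureReal_apply hX (measurableSet_singleton _)]

namespace ProbabilityTheory

open NNReal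

lemma IndepFun.integral_comp₂_eq_sum_measureReal {α β : Type*} [Fintype α]
    [MeasurableSpace α] [MeasurableSingletonClass α] [MeasurableSpace β]
    {X : Ω → α} {W : Ω → β} (hXW : IndepFun X W P) (hX : Measurable X) (hW : Measurable W)
    {F : α → β → ℝ} (hF : ∀ x, Measurable (F x)) (hFi : ∀ x, Integrable (fun ω => F x (W ω)) P) :
    ∫ ω, F (X ω) (W ω) ∂P = ∑ x, P.real (X ⁻¹' {x}) * ∫ ω, F x (W ω) ∂P := by
  have hsplit (ω : Ω) :
      F (X ω) (W ω) = ∑ x, ({x} : Set α).indicator (1 : α → ℝ) (X ω) * F x (W ω) := by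
    rw [Finset.sum_eq_single (X ω) (fun x _ hx => by simp [Ne.symm hx]) (by simp)]
    simp
  simp_rw [hsplit]
  rw [integral_finsetSum _ fun x _ => (hFi x).bdd_mul (c := 1)
    (f := fun ω => ({x} : Set α).indicator (1 : α → ℝ) (X ω))
    ((measurable_of_finite (({x} : Set α).indicator (1 : α → ℝ))).comp hX).aestronglyMeasurable
    (ae_of_all _ fun ω => by by_cases h : X ω = x <;> simp [h])]
  refine Finset.sum_congr rfl fun x _ => ?_
  rw [hXW.integral_fun_comp_mul_comp hX.aemeasurable hW.aemeasurable
    (measurable_of_finite _).aestronglyMeasurable (hF x).aestronglyMeasurable,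
    ← integral_indicator_one (hX (measurableSet_singleton x))]
  rfl

lemma hasSubgaussianMGF_sum_mul_sub_integral [IsProbabilityMeasure P] {ι : Type*} [Fintype ι]
    {B : ι → Ω → ℝ} (hB : iIndepFun B P) (hBm : ∀ i, Measurable (B i))
    (hB01 : ∀ i ω, B i ω ∈ Set.Icc 0 1) (v : ι → ℝ) :
    HasSubgaussianMGF (fun ω => ∑ i, v i * B i ω - P[fun ω => ∑ i, v i * B i ω])
      (∑ i, ‖v i‖₊ ^ 2 / 4) P := by
  have hterm (i : ι) :
      HasSubgaussianMGF (fun ω => v i * (B i ω - P[B i])) (‖v i‖₊ ^ 2 / 4) P := by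
    have h := (hasSubgaussianMGF_of_mem_Icc (μ := P) (hBm i).aemeasurable
      (ae_of_all _ (hB01 i))).const_mul (v i)
    convert h using 2
    ext
    change _ = v i ^ 2 * _
    simp
    ring
  have hindep : iIndepFun (fun i ω => v i * (B i ω - P[B i])) P :=
    hB.comp (fun i b => v i * (b - ∫ ω, B i ω ∂P)) fun i => by fun_prop
  have hint (i : ι) : Integrable (B i) P :=
    .of_mem_Icc 0 1 (hBm i).aemeasurable (ae_of_all _ (hB01 i))
  convert HasSubgaussianMGF.sum_of_iIndepFun hindep (s := Finset.univ) fun i _ => hterm i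
    using 2 with ω
  simp_rw [mul_sub, Finset.sum_sub_distrib]
  rw [integral_finsetSum _ fun i _ => (hint i).const_mul (v i)]
  simp_rw [integral_const_mul]

lemma IndepFun.isSubGaussian_comp₂ [IsProbabilityMeasure P] {α β : Type*} [Fintype α]
    [MeasurableSpace α] [MeasurableSingletonClass α] [MeasurableSpace β]
    {X : Ω → α} {W : Ω → β} (hXW : IndepFun X W P) (hX : Measurable X) (hW : Measurable W)
    {F : α → β → ℝ} (hF : ∀ x, Measurable (F x)) {c : ℝ≥0}
    (hsub : ∀ x, HasSubgaussianMGF (fun ω => F x (W ω) - P[fun ω => F x (W ω)]) c P)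
    {a b : ℝ} (hmean : ∀ x, P[fun ω => F x (W ω)] ∈ Set.Icc a b) :
    IsSubGaussian P (fun ω => F (X ω) (W ω)) (c + ((b - a) / 2) ^ 2) := by
  intro t
  set m : α → ℝ := fun x => P[fun ω => F x (W ω)]
  set M := ∫ ω, F (X ω) (W ω) ∂P
  have hFi (x : α) : Integrable (fun ω => F x (W ω)) P :=
    ((hsub x).integrable.add (integrable_const (m x))).congr (ae_of_all _ fun ω => by simp [m])
  have hM : M = P[fun ω => m (X ω)] :=
    (hXW.integral_comp₂_eq_sum_measureReal hX hW hF hFi).trans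
      (integral_comp_eq_sum_measureReal hX m).symm
  have hexp (x : α) (ω : Ω) : Real.exp (t * (F x (W ω) - M))
      = Real.exp (t * (F x (W ω) - m x)) * Real.exp (t * (m x - M)) := by
    rw [← Real.exp_add]; ring_nf
  have hcond (x : α) : ∫ ω, Real.exp (t * (F x (W ω) - M)) ∂P
      ≤ Real.exp (c * t ^ 2 / 2) * Real.exp (t * (m x - M)) := by
    simp_rw [hexp x, integral_mul_const]
    exact mul_le_mul_of_nonneg_right ((hsub x).mgf_le t) (Real.exp_pos _).le
  have hmix : mgf (fun ω => m (X ω) - P[fun ω => m (X ω)]) P t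
      ≤ Real.exp (((b - a) / 2) ^ 2 * t ^ 2 / 2) := by
    refine ((hasSubgaussianMGF_of_mem_Icc (μ := P) ((measurable_of_finite m).comp hX).aemeasurable
      (ae_of_all _ fun ω => hmean (X ω))).mgf_le t).trans_eq ?_
    norm_num [div_pow]
  calc ∫ ω, Real.exp (t * (F (X ω) (W ω) - M)) ∂P
      = ∑ x, P.real (X ⁻¹' {x}) * ∫ ω, Real.exp (t * (F x (W ω) - M)) ∂P :=
        hXW.integral_comp₂_eq_sum_measureReal (F := fun x w => Real.exp (t * (F x w - M)))
          hX hW (fun x => by fun_prop) fun x => by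
            simp_rw [hexp x]
            exact ((hsub x).integrable_exp_mul t).mul_const _
    _ ≤ ∑ x, P.real (X ⁻¹' {x}) * (Real.exp (c * t ^ 2 / 2) * Real.exp (t * (m x - M))) := by
        gcongr with x
        exact hcond x
    _ = Real.exp (c * t ^ 2 / 2) * mgf (fun ω => m (X ω) - P[fun ω => m (X ω)]) P t := by
        rw [mgf, ← hM, integral_comp_eq_sum_measureReal hX fun x => Real.exp (t * (m x - M)),
          Finset.mul_sum]
        exact Finset.sum_congr rfl fun x _ => by ring
    _ ≤ Real.exp (c * t ^ 2 / 2) * Real.exp (((b - a) / 2) ^ 2 * t ^ 2 / 2) := by gcongr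
    _ = Real.exp (t ^ 2 * (c + ((b - a) / 2) ^ 2) / 2) := by
        rw [← Real.exp_add]; ring_nf

end ProbabilityTheory

end SubGaussian

section UnaryEncoding

variable {Ω : Type*} [MeasurableSpace Ω] {P : Measure Ω}

lemma ProbabilityTheory.iIndepFun.iIndepFun_of_ueFam {d : ℕ} {X : Ω → Fin d} {V : Fin d → Ω → ℝ}
    (h : iIndepFun (m := ueFamMS) (ueFam X V) P) : iIndepFun V P :=
  (h.precomp (g := Sum.inr) Sum.inr_injective :)

lemma ProbabilityTheory.iIndepFun.indepFun_of_ueFam {d : ℕ} {X : Ω → Fin d} {V : Fin d → Ω → ℝ}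
    (h : iIndepFun (m := ueFamMS) (ueFam X V) P) (hX : Measurable X)
    (hV : ∀ j, Measurable (V j)) : IndepFun X (fun ω j => V j ω) P := by
  -- equip the coordinate types with `ueFamMS`, so that the σ-algebras on tuples below are products
  let _ := @ueFamMS d
  have hmeas : ∀ i, Measurable (ueFam X V i) := by
    rintro (_ | j)
    · exact hX
    · exact hV j
  refine (h.indepFun_finset {Sum.inl ()} (Finset.univ.map .inr) (by simp) hmeas).comp
    (φ := fun y => y ⟨Sum.inl (), by simp⟩) (ψ := fun y j => y ⟨Sum.inr j, by simp⟩) ?_ ?_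
  · exact measurable_pi_apply _
  · exact measurable_pi_lambda _ fun j => measurable_pi_apply _

variable {d : ℕ} (ε : ℝ)

lemma ueR_mem_Icc (x j : Fin d) (u : ℝ) : ueR ε x j u ∈ Set.Icc 0 1 := by
  unfold ueR
  split_ifs <;> norm_num

@[fun_prop]
lemma measurable_ueR (x j : Fin d) : Measurable (ueR ε x j) :=
  Measurable.ite measurableSet_Iic measurable_const measurable_const

lemma ueR_of_ne {x j : Fin d} (h : x ≠ j) (u : ℝ) : ueR ε x j u = 1 - ueR ε j j u := by
  unfold ueR
  split_ifs <;> simp_all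

variable [IsProbabilityMeasure P]

lemma integral_sum_mul_ueR_mem_Icc {V : Fin d → Ω → ℝ} (hV : ∀ j, Measurable (V j))
    (v : Fin d → ℝ) (x : Fin d) :
    P[fun ω => ∑ j, v j * ueR ε x j (V j ω)] ∈
      Set.Icc (∑ j, v j * (1 - P[fun ω => ueR ε j j (V j ω)]) - √(∑ j, v j ^ 2))
        (∑ j, v j * (1 - P[fun ω => ueR ε j j (V j ω)]) + √(∑ j, v j ^ 2)) := by
  set a : Fin d → ℝ := fun j => P[fun ω => ueR ε j j (V j ω)]
  have hint (y j : Fin d) : Integrable (fun ω => ueR ε y j (V j ω)) P :=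
    .of_mem_Icc 0 1 ((measurable_ueR ε y j).comp (hV j)).aemeasurable
      (ae_of_all _ fun ω => ueR_mem_Icc ε y j _)
  have hmean (j : Fin d) :
      P[fun ω => ueR ε x j (V j ω)] = (1 - a j) + if x = j then 2 * a j - 1 else 0 := by
    by_cases h : x = j
    · subst h
      simp only [if_true, a]
      ring
    · simp_rw [ueR_of_ne ε h]
      rw [integral_sub (integrable_const 1) (hint j j)]
      simp [h, a]
  have hsum : P[fun ω => ∑ j, v j * ueR ε x j (V j ω)]
      = ∑ j, v j * (1 - a j) + v x * (2 * a x - 1) := by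
    rw [integral_finsetSum _ fun j _ => (hint x j).const_mul _]
    simp_rw [integral_const_mul, hmean, mul_add, Finset.sum_add_distrib, mul_ite, mul_zero,
      Finset.sum_ite_eq, Finset.mem_univ, if_true]
  have ha0 : 0 ≤ a x := integral_nonneg fun ω => (ueR_mem_Icc ε x x _).1
  have ha1 : a x ≤ 1 := by
    simpa using integral_mono (hint x x) (integrable_const 1) fun ω => (ueR_mem_Icc ε x x _).2
  have hv : |v x| ≤ √(∑ j, v j ^ 2) :=
    Real.abs_le_sqrt (Finset.single_le_sum (fun j _ => sq_nonneg (v j)) (Finset.mem_univ x))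
  have hdev : |v x * (2 * a x - 1)| ≤ √(∑ j, v j ^ 2) := by
    rw [abs_mul]
    exact (mul_le_of_le_one_right (abs_nonneg _) (abs_le.2 ⟨by linarith, by linarith⟩)).trans hv
  rw [hsum]
  constructor <;> linarith [abs_le.1 hdev]

end UnaryEncoding

/-- the unary-encoding privatization of a multinomial datum is an SG(17/4)
random vector. -/
theorem stmt_11 (Ω : Type) (_ : MeasurableSpace Ω) (P : Measure Ω) [IsProbabilityMeasure P]
    (d : ℕ) (ε : ℝ)
    (X : Ω → Fin d) (V : Fin d → Ω → ℝ)
    (hmX : Measurable X) (hmV : ∀ j, Measurable (V j))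
    (hindep : iIndepFun (m := ueFamMS) (ueFam X V) P) :
    IsSubGaussianVec P (fun ω j => ueR ε (X ω) j (V j ω)) (17 / 4) := by
  intro v
  have hsub (x : Fin d) := hasSubgaussianMGF_sum_mul_sub_integral
    (hindep.iIndepFun_of_ueFam.comp (fun j => ueR ε x j) fun j => measurable_ueR ε x j)
    (fun j => (measurable_ueR ε x j).comp (hmV j)) (fun j ω => ueR_mem_Icc ε x j (V j ω)) v
  refine ((hindep.indepFun_of_ueFam hmX hmV).isSubGaussian_comp₂
    (F := fun x w => ∑ j, v j * ueR ε x j (w j)) hmX (measurable_pi_lambda _ hmV)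
    (fun x => by fun_prop) hsub (integral_sum_mul_ueR_mem_Icc ε hmV v)).mono ?_
  have hS : 0 ≤ ∑ j, v j ^ 2 := by positivity
  have hc : ((∑ j, ‖v j‖₊ ^ 2 / 4 : NNReal) : ℝ) = (∑ j, v j ^ 2) / 4 := by
    push_cast
    simp [Finset.sum_div]
  rw [hc, add_sub_sub_cancel, ← two_mul, mul_div_cancel_left₀ _ two_ne_zero, Real.sq_sqrt hS]
  linarith
end
end

section
/- Let (X₁,…,X_n) be a negatively associated collection of real random variables, let k ∈ [n], and let h₁,…,h_k be real-valued coordinatewise non-increasing functions defined on pairwise disjoint subsets of the variables {X₁,…,X_n}. Then the collection (h₁,…,h_k) of random variables obtained by applying each h_j to its variables is negatively associated. -/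
open MeasureTheory

noncomputable section

/-- Negative association of a finite collection of real random variables. -/
def NegAssoc {Ω : Type*} [MeasurableSpace Ω] (P : Measure Ω) {n : ℕ}
    (X : Fin n → Ω → ℝ) : Prop :=
  ∀ I₁ I₂ : Finset (Fin n), Disjoint I₁ I₂ → I₁ ∪ I₂ = Finset.univ →
    ∀ f g : (Fin n → ℝ) → ℝ, Monotone f → Monotone g →
      (∀ x y : Fin n → ℝ, (∀ i ∈ I₁, x i = y i) → f x = f y) →
      (∀ x y : Fin n → ℝ, (∀ i ∈ I₂, x i = y i) → g x = g y) →
      Integrable (fun ω => f (fun i => X i ω)) P →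
      Integrable (fun ω => g (fun i => X i ω)) P →
      Integrable (fun ω => f (fun i => X i ω) * g (fun i => X i ω)) P →
      ∫ ω, f (fun i => X i ω) * g (fun i => X i ω) ∂P ≤
        (∫ ω, f (fun i => X i ω) ∂P) * ∫ ω, g (fun i => X i ω) ∂P

/-- non-increasing functions of disjoint subsets of negatively associated
random variables are negatively associated. -/
theorem stmt_13 (Ω : Type) (_ : MeasurableSpace Ω) (P : Measure Ω) [IsProbabilityMeasure P]
    (n k : ℕ) (hk1 : 1 ≤ k) (hkn : k ≤ n)
    (X : Fin n → Ω → ℝ) (hNA : NegAssoc P X)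
    (S : Fin k → Finset (Fin n)) (hdisj : ∀ a b : Fin k, a ≠ b → Disjoint (S a) (S b))
    (h : Fin k → (Fin n → ℝ) → ℝ)
    (hanti : ∀ a, Antitone (h a))
    (hdep : ∀ a, ∀ x y : Fin n → ℝ, (∀ i ∈ S a, x i = y i) → h a x = h a y) :
    NegAssoc P (fun a ω => h a (fun i => X i ω)) := by
  intro I₁ I₂ hdis huniv f g hf hg hfdep hgdep hfi hgi hfgi
  set F : (Fin n → ℝ) → ℝ := fun x => f (fun a => h a x) with hF
  set G : (Fin n → ℝ) → ℝ := fun x => g (fun a => h a x) with hG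
  set J₁ : Finset (Fin n) := I₁.biUnion S with hJ
  have hFanti : Antitone F := fun x y hxy => hf (fun a => hanti a hxy)
  have hGanti : Antitone G := fun x y hxy => hg (fun a => hanti a hxy)
  have hFdep : ∀ x y : Fin n → ℝ, (∀ i ∈ J₁, x i = y i) → F x = F y := by
    intro x y hxy
    apply hfdep
    intro a ha
    exact hdep a x y (fun i hi => hxy i (Finset.mem_biUnion.2 ⟨a, ha, hi⟩))
  have hGdep : ∀ x y : Fin n → ℝ, (∀ i ∈ J₁ᶜ, x i = y i) → G x = G y := by
    intro x y hxy
    apply hgdep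
    intro a ha
    refine hdep a x y (fun i hi => hxy i ?_)
    rw [Finset.mem_compl]
    intro hmem
    obtain ⟨b, hb, hib⟩ := Finset.mem_biUnion.1 hmem
    have hab : a ≠ b := fun e => (Finset.disjoint_left.1 hdis) (e ▸ hb) ha
    exact Finset.disjoint_left.1 (hdisj a b hab) hi hib
  have key := hNA J₁ J₁ᶜ (disjoint_compl_right) (Finset.union_compl _)
    (fun x => -F x) (fun x => -G x)
    (fun x y hxy => neg_le_neg (hFanti hxy))
    (fun x y hxy => neg_le_neg (hGanti hxy))
    (fun x y hxy => by simp [hFdep x y hxy])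
    (fun x y hxy => by simp [hGdep x y hxy])
    hfi.neg hgi.neg (by simpa [neg_mul_neg] using hfgi)
  simpa [neg_mul_neg, integral_neg, neg_mul, mul_neg] using key
end
end

section
/- Let V ≥ 1 be an integer, let a > 0, and let λ₁,…,λ_V be nonnegative reals with Σ_{v=1}^V λ_v² ≤ a. Define λ̃_v = max{λ_v/a^{1/2}, V^{−1/2}} for v ∈ [V]. Then 3V²/4 ≤ Σ_{v=1}^V λ̃_v^{−2} ≤ V². -/
/-!
Write `μ_v = λ_v / √a`, so that `∑ μ_v² ≤ 1`, and `s = V^{-1/2}`. Each term `λ̃_v⁻²` is at most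
`s⁻² = V`, which gives the upper bound. For the lower bound, each term is at least the tangent line
`V - V² μ_v² / 4`: if `μ_v ≤ s` the term is `V`, and otherwise this is AM–GM,
`μ⁻² + V² μ² / 4 ≥ V`. Summing, `∑ λ̃_v⁻² ≥ V² - (V² / 4) ∑ μ_v² ≥ 3V²/4`.
-/

open Finset

section

variable {K : Type*} [Field K] [LinearOrder K] [IsStrictOrderedRing K]

theorem inv_sq_max_le_inv_sq {μ s : K} (hs : 0 < s) : (max μ s ^ 2)⁻¹ ≤ (s ^ 2)⁻¹ :=
  inv_anti₀ (by positivity) (pow_le_pow_left₀ hs.le (le_max_right μ s) 2)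

theorem inv_sq_sub_le_inv_sq_max {μ s : K} (hs : 0 < s) :
    (s ^ 2)⁻¹ - μ ^ 2 / (4 * s ^ 4) ≤ (max μ s ^ 2)⁻¹ := by
  rcases le_or_gt μ s with hμs | hsμ
  · rw [max_eq_right hμs]
    have : 0 ≤ μ ^ 2 / (4 * s ^ 4) := by positivity
    linarith
  · rw [max_eq_left hsμ.le]
    have hμ : 0 < μ := hs.trans hsμ
    have key : 0 ≤ (μ⁻¹ - μ / (2 * s ^ 2)) ^ 2 := sq_nonneg _
    have expand : (μ⁻¹ - μ / (2 * s ^ 2)) ^ 2 = (μ ^ 2)⁻¹ - (s ^ 2)⁻¹ + μ ^ 2 / (4 * s ^ 4) := by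
      field_simp
      ring
    linarith

variable {ι : Type*} [Fintype ι]

theorem sum_inv_sq_max_le (μ : ι → K) {s : K} (hs : 0 < s) :
    ∑ i, (max (μ i) s ^ 2)⁻¹ ≤ Fintype.card ι * (s ^ 2)⁻¹ :=
  calc ∑ i, (max (μ i) s ^ 2)⁻¹ ≤ ∑ _i : ι, (s ^ 2)⁻¹ :=
        sum_le_sum fun i _ => inv_sq_max_le_inv_sq hs
    _ = Fintype.card ι * (s ^ 2)⁻¹ := by rw [sum_const, card_univ, nsmul_eq_mul]

theorem sub_le_sum_inv_sq_max (μ : ι → K) (hμ : ∑ i, μ i ^ 2 ≤ 1) {s : K} (hs : 0 < s) :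
    Fintype.card ι * (s ^ 2)⁻¹ - (4 * s ^ 4)⁻¹ ≤ ∑ i, (max (μ i) s ^ 2)⁻¹ :=
  calc Fintype.card ι * (s ^ 2)⁻¹ - (4 * s ^ 4)⁻¹
      ≤ Fintype.card ι * (s ^ 2)⁻¹ - (∑ i, μ i ^ 2) / (4 * s ^ 4) := by
        have : (∑ i, μ i ^ 2) / (4 * s ^ 4) ≤ 1 / (4 * s ^ 4) := by gcongr
        rw [one_div] at this
        linarith
    _ = ∑ i, ((s ^ 2)⁻¹ - μ i ^ 2 / (4 * s ^ 4)) := by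
        rw [sum_sub_distrib, sum_div, sum_const, card_univ, nsmul_eq_mul]
    _ ≤ ∑ i, (max (μ i) s ^ 2)⁻¹ := sum_le_sum fun i _ => inv_sq_sub_le_inv_sq_max hs

end

theorem stmt_15_general (V : ℕ) (hV : 1 ≤ V) (a : ℝ) (ha : 0 < a) (lam : Fin V → ℝ)
    (hsum : ∑ v, (lam v) ^ 2 ≤ a) :
    3 * (V : ℝ) ^ 2 / 4 ≤ ∑ v, ((max (lam v / Real.sqrt a) ((Real.sqrt (V : ℝ))⁻¹)) ^ 2)⁻¹ ∧
      ∑ v, ((max (lam v / Real.sqrt a) ((Real.sqrt (V : ℝ))⁻¹)) ^ 2)⁻¹ ≤ (V : ℝ) ^ 2 := by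
  have hVpos : (0 : ℝ) < V := by exact_mod_cast hV
  have hs : 0 < (Real.sqrt (V : ℝ))⁻¹ := by positivity
  have hs2 : ((Real.sqrt (V : ℝ))⁻¹ ^ 2)⁻¹ = V := by
    rw [inv_pow, inv_inv, Real.sq_sqrt hVpos.le]
  have hs4 : (4 * (Real.sqrt (V : ℝ))⁻¹ ^ 4)⁻¹ = (V : ℝ) ^ 2 / 4 := by
    rw [show (4 : ℕ) = 2 * 2 from rfl, pow_mul, inv_pow, Real.sq_sqrt hVpos.le]
    field_simp
  have hμ : ∑ v, (lam v / Real.sqrt a) ^ 2 ≤ 1 := by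
    simp_rw [div_pow, Real.sq_sqrt ha.le, ← sum_div]
    exact (div_le_one ha).2 hsum
  have lower := sub_le_sum_inv_sq_max _ hμ hs
  have upper := sum_inv_sq_max_le (fun v => lam v / Real.sqrt a) hs
  rw [hs2, hs4, Fintype.card_fin] at lower
  rw [hs2, Fintype.card_fin] at upper
  constructor <;> linarith

/-- Let `V ≥ 1`, `a > 0`, and nonnegative reals `λ₁,…,λ_V` with `∑ λ_v² ≤ a`.
With `λ̃_v = max (λ_v / √a) (V^{-1/2})`, we have `3V²/4 ≤ ∑ λ̃_v⁻² ≤ V²`. -/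
theorem stmt_15 (V : ℕ) (hV : 1 ≤ V) (a : ℝ) (ha : 0 < a) (lam : Fin V → ℝ)
    (hnn : ∀ v, 0 ≤ lam v) (hsum : ∑ v, (lam v) ^ 2 ≤ a) :
    3 * (V : ℝ) ^ 2 / 4 ≤ ∑ v, ((max (lam v / Real.sqrt a) ((Real.sqrt (V : ℝ))⁻¹)) ^ 2)⁻¹ ∧
      ∑ v, ((max (lam v / Real.sqrt a) ((Real.sqrt (V : ℝ))⁻¹)) ^ 2)⁻¹ ≤ (V : ℝ) ^ 2 :=
  stmt_15_general V hV a ha lam hsum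
end

section
/- For every real x ∈ (0,1], the integral ∫₀^x (log(1 + 1/a))^{1/2} da is at most x·(log(4/x))^{1/2}. -/
open MeasureTheory Set Real

/-!
Split `log (1 + 1/a) = log (1 + a) - log a`, so that `∫₀^x log (1 + 1/a) da` equals
`(1 + x) log (1 + x) - x log x`, which convexity of `t ↦ t log t` on `[1, 2]` bounds by
`x log (4/x)`. Jensen's inequality for the concave `√` (equivalently Cauchy–Schwarz) gives
`∫₀^x √g ≤ √(x ∫₀^x g)` for `g ≥ 0`, and combining the two yields the claim.
-/

section Sqrt

variable {α : Type*} [MeasurableSpace α] {μ : Measure α} [IsFiniteMeasure μ] {f : α → ℝ}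

-- `√y ≤ (|y| + 1) / 2` for every real `y`.
theorem MeasureTheory.Integrable.sqrt (hf : Integrable f μ) :
    Integrable (fun a => √(f a)) μ := by
  refine (hf.norm.add (integrable_const 1)).div_const 2 |>.mono'
    (continuous_sqrt.comp_aestronglyMeasurable hf.aestronglyMeasurable) (.of_forall fun a => ?_)
  have h := sq_sqrt (abs_nonneg (f a))
  simp only [Pi.add_apply, norm_of_nonneg (sqrt_nonneg _), norm_eq_abs]
  nlinarith [sqrt_le_sqrt (le_abs_self (f a)), sq_nonneg (√|f a| - 1)]

theorem integral_sqrt_le_sqrt_mul_integral (hf : Integrable f μ) (hf0 : 0 ≤ᵐ[μ] f) :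
    ∫ a, √(f a) ∂μ ≤ √(μ.real univ * ∫ a, f a ∂μ) := by
  rcases eq_zero_or_neZero μ with rfl | _
  · simp
  have hm := measureReal_univ_pos (μ := μ)
  have hjensen := strictConcaveOn_sqrt.concaveOn.le_map_average continuous_sqrt.continuousOn
    isClosed_Ici hf0 hf hf.sqrt
  rw [average_eq, average_eq, smul_eq_mul, smul_eq_mul, inv_mul_le_iff₀ hm] at hjensen
  calc ∫ a, √(f a) ∂μ
      ≤ μ.real univ * √((μ.real univ)⁻¹ * ∫ a, f a ∂μ) := hjensen
    _ = √(μ.real univ * ∫ a, f a ∂μ) := by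
      rw [← sqrt_mul_self hm.le, ← sqrt_mul (mul_self_nonneg _), sqrt_mul_self hm.le]
      congr 1
      field_simp

end Sqrt

theorem log_one_add_one_div {a : ℝ} (ha : 0 < a) : log (1 + 1 / a) = log (1 + a) - log a := by
  rw [← log_div (by positivity) ha.ne', add_div, div_self ha.ne', add_comm]

theorem intervalIntegrable_log_one_add (x : ℝ) :
    IntervalIntegrable (fun a => log (1 + a)) volume 0 x := by
  simpa using (intervalIntegral.intervalIntegrable_log' (a := 1) (b := 1 + x)).comp_add_left 1

theorem integrableOn_log_one_add_one_div (x : ℝ) :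
    IntegrableOn (fun a => log (1 + 1 / a)) (Ioc 0 x) :=
  ((intervalIntegrable_log_one_add x).sub intervalIntegral.intervalIntegrable_log').1.congr_fun
    (fun _ ha => (log_one_add_one_div ha.1).symm) measurableSet_Ioc

theorem setIntegral_Ioc_log_one_add_one_div {x : ℝ} (hx : 0 ≤ x) :
    ∫ a in Ioc 0 x, log (1 + 1 / a) = (1 + x) * log (1 + x) - x * log x := by
  rw [setIntegral_congr_fun measurableSet_Ioc (fun _ ha => log_one_add_one_div ha.1),
    ← intervalIntegral.integral_of_le hx, intervalIntegral.integral_sub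
      (intervalIntegrable_log_one_add x) intervalIntegral.intervalIntegrable_log',
    intervalIntegral.integral_comp_add_left (fun a => log a), integral_log, integral_log]
  simp only [add_zero, log_one, mul_zero, sub_zero, log_zero]
  ring

theorem one_add_mul_log_one_add_le {x : ℝ} (hx0 : 0 ≤ x) (hx1 : x ≤ 1) :
    (1 + x) * log (1 + x) ≤ x * log 4 := by
  have h := convexOn_mul_log.2 (mem_Ici.2 zero_le_one) (mem_Ici.2 zero_le_two)
    (sub_nonneg.2 hx1) hx0 (sub_add_cancel 1 x)
  have h4 : log 4 = 2 * log 2 := by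
    rw [show (4 : ℝ) = 2 ^ 2 by norm_num, log_pow]; norm_num
  simp only [smul_eq_mul, log_one, mul_zero, mul_one] at h
  rwa [show 1 - x + x * 2 = 1 + x by ring, zero_add, ← h4] at h

/-- For every `x ∈ (0,1]`,
`∫₀^x √(log(1 + 1/a)) da ≤ x · √(log(4/x))`. -/
theorem stmt_16 (x : ℝ) (hx0 : 0 < x) (hx1 : x ≤ 1) :
    ∫ a in Set.Ioc (0 : ℝ) x, Real.sqrt (Real.log (1 + 1 / a)) ≤
      x * Real.sqrt (Real.log (4 / x)) := by
  have hnonneg : 0 ≤ᵐ[volume.restrict (Ioc 0 x)] fun a => log (1 + 1 / a) :=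
    (ae_restrict_iff' measurableSet_Ioc).2 (.of_forall fun a ha =>
      log_nonneg (le_add_of_nonneg_right (one_div_nonneg.2 ha.1.le)))
  have hI : ∫ a in Ioc 0 x, log (1 + 1 / a) ≤ x * log (4 / x) := by
    rw [setIntegral_Ioc_log_one_add_one_div hx0.le, log_div (by norm_num) hx0.ne']
    linarith [one_add_mul_log_one_add_le hx0.le hx1]
  calc ∫ a in Ioc 0 x, √(log (1 + 1 / a))
      ≤ √(x * ∫ a in Ioc 0 x, log (1 + 1 / a)) := by
        simpa [volume_real_Ioc_of_le hx0.le] using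
          integral_sqrt_le_sqrt_mul_integral (integrableOn_log_one_add_one_div x) hnonneg
    _ ≤ √(x * (x * log (4 / x))) := sqrt_le_sqrt (mul_le_mul_of_nonneg_left hI hx0.le)
    _ = x * √(log (4 / x)) := by
        rw [← mul_assoc, sqrt_mul (mul_self_nonneg x), sqrt_mul_self hx0.le]
end
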